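/- In the spinorial realization on V = MvPolynomial (Fin 4) ℂ ⊗_ℂ Cl, with J_{μν} = −i(L_{μν} + Σ_{μν}) and, for S ∈ {{1,2}, {3,4}, {1,2,3,4}}, the osp(1|2) operators 𝒜₋^S = Σ_{μ∈S} a_μγ_μ, 𝒜₊^S = Σ_{μ∈S} a_μ†γ_μ, 𝒜₀^S = (1/2)Σ_{μ∈S}{a_μ†,a_μ}, 𝒫^{1,2} = iγ₁γ₂, 𝒫^{3,4} = iγ₃γ₄, 𝒫^{1,2,3,4} = −γ₁γ₂γ₃γ₄, and Casimirs 𝒬^S = (𝒜₊^S𝒜₋^S − 𝒜₀^S + 1/2)𝒫^S, the Casimir operators of o(2) ⊕ o(2) and o(4) are related to those of osp(1|2) by: (J₁₂)² = (𝒬^{1,2})², (J₃₄)² = (𝒬^{3,4})², and Σ_{1≤i<j≤4} (J_{ij})² = (𝒬^{1,2,3,4})² − 3/4. -/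

import Mathlib

/-!
Since `(γ_μγ_ν)² = -1`, rewriting `𝒜₊^S𝒜₋^S - 𝒜₀^S + 1/2` as
`Σ_{μ<ν ∈ S} L_{μν}γ_μγ_ν + (1 - |S|)/2` shows that for a pair `S = {μ, ν}` the Casimir
`𝒬^S` is `J_{μν}` itself. For `S = {1,2,3,4}` the pseudoscalar `γ₁γ₂γ₃γ₄` squares to `1` and, anticommuting
with each `γ_μ`, commutes with every `L_{μν}γ_μγ_ν`, so `(𝒬^S)² = (X - 3/2)²` with `X = Σ_{μ<ν} L_{μν}γ_μγ_ν`.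
As `J_{μν}² = 1/4 - L_{μν}² - L_{μν}γ_μγ_ν`, the claim reduces to the quadratic relation
`X² = 2X - Σ_{μ<ν} L_{μν}²`, which follows by normal ordering.
-/

noncomputable section

open scoped TensorProduct

/-- The polynomial factor `ℂ[x₁,…,x₄]`. -/
abbrev Mpoly : Type := MvPolynomial (Fin 4) ℂ

/-- The standard quadratic form `Q(v) = Σ_μ v_μ²` on `ℂ⁴`. -/
def Qform : QuadraticForm ℂ (Fin 4 → ℂ) :=
  QuadraticMap.weightedSumSquares ℂ (fun _ : Fin 4 => (1 : ℂ))

/-- The Clifford algebra of `ℂ⁴`. -/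
abbrev Cl : Type := CliffordAlgebra Qform

/-- The Clifford generators `γ_μ = ι(e_μ)`. -/
def γc (μ : Fin 4) : Cl := CliffordAlgebra.ι Qform (Pi.single μ 1)

/-- The representation space `V = ℂ[x₁,…,x₄] ⊗ Cl`. -/
abbrev V : Type := Mpoly ⊗[ℂ] Cl

/-- `a_μ = ∂/∂x_μ` acting on the first factor of `V`. -/
def aop (μ : Fin 4) : Module.End ℂ V :=
  LinearMap.rTensor Cl (MvPolynomial.pderiv μ).toLinearMap

/-- `a_μ† = x_μ·` acting on the first factor of `V`. -/
def adop (μ : Fin 4) : Module.End ℂ V :=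
  LinearMap.rTensor Cl (LinearMap.mulLeft ℂ (MvPolynomial.X μ : Mpoly))

/-- `γ_μ` acting by left multiplication on the second factor of `V`. -/
def gop (μ : Fin 4) : Module.End ℂ V :=
  LinearMap.lTensor Mpoly (LinearMap.mulLeft ℂ (γc μ))

/-- `L_{μν} = a_μ†a_ν - a_μa_ν†`. -/
def Lop (μ ν : Fin 4) : Module.End ℂ V := adop μ * aop ν - aop μ * adop ν

/-- `Σ_{μν} = (1/2)γ_μγ_ν`. -/
def Sop (μ ν : Fin 4) : Module.End ℂ V := (2⁻¹ : ℂ) • (gop μ * gop ν)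

/-- The total angular momentum `J_{μν} = -i(L_{μν} + Σ_{μν})` for `μ ≠ ν`, with the
convention `J_{μμ} = 0`. -/
def Jop (μ ν : Fin 4) : Module.End ℂ V :=
  if μ = ν then 0 else -(Complex.I • (Lop μ ν + Sop μ ν))

/-- The Hamiltonian `H = (1/2)Σ_μ {a_μ†, a_μ}`. -/
def Hop : Module.End ℂ V :=
  (2⁻¹ : ℂ) • ∑ μ : Fin 4, (adop μ * aop μ + aop μ * adop μ)

/-- `𝒜₋^S = Σ_{μ∈S} a_μγ_μ`. -/
def AmS (S : Finset (Fin 4)) : Module.End ℂ V := ∑ μ ∈ S, aop μ * gop μ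

/-- `𝒜₊^S = Σ_{μ∈S} a_μ†γ_μ`. -/
def ApS (S : Finset (Fin 4)) : Module.End ℂ V := ∑ μ ∈ S, adop μ * gop μ

/-- `𝒜₀^S = (1/2)Σ_{μ∈S} {a_μ†, a_μ}`. -/
def A0S (S : Finset (Fin 4)) : Module.End ℂ V :=
  (2⁻¹ : ℂ) • ∑ μ ∈ S, (adop μ * aop μ + aop μ * adop μ)

/-- The `osp(1|2)` Casimir operator `𝒬^S = (𝒜₊^S𝒜₋^S - 𝒜₀^S + 1/2)𝒫^S`. -/
def QS (S : Finset (Fin 4)) (P : Module.End ℂ V) : Module.End ℂ V :=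
  (ApS S * AmS S - A0S S + (2⁻¹ : ℂ) • (1 : Module.End ℂ V)) * P

open MvPolynomial LinearMap Finset

lemma pderiv_pderiv_comm {σ R : Type*} [CommSemiring R] (i j : σ) (p : MvPolynomial σ R) :
    pderiv i (pderiv j p) = pderiv j (pderiv i p) := by
  classical
  induction p using MvPolynomial.induction_on with
  | C a => simp
  | add p q hp hq => simp [hp, hq]
  | mul_X p k hp =>
    simp only [pderiv_mul, pderiv_X, map_add, hp, Pi.single_apply]
    split_ifs <;> simp [add_right_comm]

lemma γc_mul_self (μ : Fin 4) : γc μ * γc μ = 1 := by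
  have hQ : Qform (Pi.single μ 1) = 1 := by
    simp [Qform, QuadraticMap.weightedSumSquares_apply, Pi.single_apply]
  rw [γc, CliffordAlgebra.ι_sq_scalar, hQ, map_one]

lemma γc_anticomm {μ ν : Fin 4} (h : μ ≠ ν) : γc μ * γc ν = -(γc ν * γc μ) := by
  refine CliffordAlgebra.ι_mul_ι_comm_of_isOrtho ?_
  rw [QuadraticMap.isOrtho_def]
  fin_cases μ <;> fin_cases ν <;> simp_all [Qform, Fin.sum_univ_four]

/- The ring structure of `Module.End ℂ V` comes through `AddCommGroup V`, whose underlying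
`AddCommMonoid` agrees with the one `Module.End ℂ V` is built on only after unfolding; so
`simp` and `rw` cannot use `mul_sub`, `neg_mul`, `neg_neg`, ... here, and these instances of
the corresponding `LinearMap` lemmas replace them. -/
section EndV

variable (x y z : Module.End ℂ V)

lemma endV_mul_sub : x * (y - z) = x * y - x * z := comp_sub _ _ _
lemma endV_sub_mul : (x - y) * z = x * z - y * z := sub_comp _ _ _
lemma endV_mul_neg : x * -y = -(x * y) := comp_neg _ _
lemma endV_neg_mul : -x * y = -(x * y) := neg_comp _ _
lemma endV_neg_neg : - -x = x := neg_neg x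

end EndV

lemma gop_mul_self (μ : Fin 4) : gop μ * gop μ = 1 :=
  TensorProduct.ext' fun p c => by simp [gop, ← mul_assoc, γc_mul_self]

lemma gop_anticomm {μ ν : Fin 4} (h : μ ≠ ν) : gop μ * gop ν = -(gop ν * gop μ) :=
  TensorProduct.ext' fun p c => by simp [gop, ← mul_assoc, γc_anticomm h, TensorProduct.tmul_neg]

lemma commute_gop_rTensor (μ : Fin 4) (f : Module.End ℂ Mpoly) : Commute (gop μ) (f.rTensor Cl) :=
  (lTensor_comp_rTensor _ _ _).trans (rTensor_comp_lTensor _ _ _).symm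

lemma commute_gop_aop (μ ν : Fin 4) : Commute (gop μ) (aop ν) := commute_gop_rTensor _ _

lemma commute_gop_adop (μ ν : Fin 4) : Commute (gop μ) (adop ν) := commute_gop_rTensor _ _

lemma commute_aop_aop (μ ν : Fin 4) : Commute (aop μ) (aop ν) :=
  TensorProduct.ext' fun p c => by simp [aop, pderiv_pderiv_comm μ ν p]

lemma commute_adop_adop (μ ν : Fin 4) : Commute (adop μ) (adop ν) :=
  TensorProduct.ext' fun p c => by simp [adop, mul_left_comm]

lemma aop_mul_adop_self (μ : Fin 4) : aop μ * adop μ = adop μ * aop μ + 1 :=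
  TensorProduct.ext' fun p c => by simp [aop, adop, TensorProduct.add_tmul, mul_comm, add_comm]

lemma aop_mul_adop_of_ne {μ ν : Fin 4} (h : μ ≠ ν) : aop μ * adop ν = adop ν * aop μ :=
  TensorProduct.ext' fun p c => by simp [aop, adop, pderiv_X_of_ne (Ne.symm h), mul_comm]

lemma Lop_of_ne {μ ν : Fin 4} (h : μ ≠ ν) : Lop μ ν = adop μ * aop ν - adop ν * aop μ := by
  rw [Lop, aop_mul_adop_of_ne h]

lemma Lop_eq_rTensor (μ ν : Fin 4) : Lop μ ν =
    (mulLeft ℂ (X μ : Mpoly) * (pderiv ν).toLinearMap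
      - (pderiv μ).toLinearMap * mulLeft ℂ (X ν : Mpoly)).rTensor Cl := by
  rw [rTensor_sub, rTensor_mul, rTensor_mul]; rfl

lemma commute_gop_Lop (ρ μ ν : Fin 4) : Commute (gop ρ) (Lop μ ν) := by
  rw [Lop_eq_rTensor]; exact commute_gop_rTensor _ _

lemma gop_mul_gop_mul_self {μ ν : Fin 4} (h : μ ≠ ν) : gop μ * gop ν * (gop μ * gop ν) = -1 := by
  rw [mul_assoc, ← mul_assoc (gop ν), gop_anticomm h.symm, endV_neg_mul, endV_mul_neg,
    ← mul_assoc, ← mul_assoc, gop_mul_self, one_mul, gop_mul_self]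

/- Rewrite rules bringing a monomial to the order `a† … a … γ …`, the `γ`s sorted by index;
`simp` with them decides identities in the Weyl–Clifford algebra. -/
section NormalOrder

variable {μ ν : Fin 4} (z : Module.End ℂ V)

lemma aop_mul_adop_self_assoc : aop μ * (adop μ * z) = adop μ * (aop μ * z) + z := by
  rw [← mul_assoc, aop_mul_adop_self, add_mul, one_mul, mul_assoc]

lemma aop_mul_adop_of_ne_assoc (h : μ ≠ ν) : aop μ * (adop ν * z) = adop ν * (aop μ * z) := by
  rw [← mul_assoc, aop_mul_adop_of_ne h, mul_assoc]

lemma gop_mul_self_assoc : gop μ * (gop μ * z) = z := by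
  rw [← mul_assoc, gop_mul_self, one_mul]

lemma gop_mul_gop_of_lt (h : ν < μ) : gop μ * gop ν = -(gop ν * gop μ) :=
  gop_anticomm h.ne'

lemma gop_mul_gop_of_lt_assoc (h : ν < μ) : gop μ * (gop ν * z) = -(gop ν * (gop μ * z)) := by
  rw [← mul_assoc, gop_mul_gop_of_lt h, endV_neg_mul, mul_assoc]

end NormalOrder

def spinOrbit (μ ν : Fin 4) : Module.End ℂ V := Lop μ ν * (gop μ * gop ν)

lemma spinOrbit_eq {μ ν : Fin 4} (h : μ ≠ ν) : spinOrbit μ ν =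
    adop μ * aop ν * (gop μ * gop ν) + adop ν * aop μ * (gop ν * gop μ) := by
  rw [spinOrbit, Lop_of_ne h, gop_anticomm h.symm, endV_mul_neg, endV_sub_mul]
  exact sub_eq_add_neg (G := Module.End ℂ V) _ _

def spinOrbitSum : Module.End ℂ V :=
  spinOrbit 0 1 + spinOrbit 0 2 + spinOrbit 0 3 + spinOrbit 1 2 + spinOrbit 1 3 + spinOrbit 2 3

def casimirFactor (S : Finset (Fin 4)) : Module.End ℂ V :=
  ApS S * AmS S - A0S S + (2⁻¹ : ℂ) • 1

lemma QS_eq (S : Finset (Fin 4)) (P : Module.End ℂ V) : QS S P = casimirFactor S * P := rfl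

lemma ApS_mul_AmS (S : Finset (Fin 4)) :
    ApS S * AmS S = ∑ μ ∈ S, ∑ ν ∈ S, adop μ * aop ν * (gop μ * gop ν) := by
  simp only [ApS, AmS, sum_mul_sum, mul_assoc, (commute_gop_aop _ _).left_comm]

lemma A0S_eq (S : Finset (Fin 4)) :
    A0S S = ∑ μ ∈ S, adop μ * aop μ + (2⁻¹ * #S : ℂ) • 1 := by
  simp only [A0S, aop_mul_adop_self, sum_add_distrib, sum_const]
  module

lemma casimirFactor_pair {μ ν : Fin 4} (h : μ ≠ ν) :
    casimirFactor {μ, ν} = spinOrbit μ ν - (2⁻¹ : ℂ) • 1 := by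
  rw [casimirFactor, ApS_mul_AmS, A0S_eq, spinOrbit_eq h, card_pair h]
  simp only [sum_pair h, gop_mul_self, mul_one]
  module

lemma casimirFactor_four : casimirFactor {0, 1, 2, 3} = spinOrbitSum - (3 / 2 : ℂ) • 1 := by
  rw [casimirFactor, ApS_mul_AmS, A0S_eq, spinOrbitSum]
  simp +decide only [spinOrbit_eq, sum_insert, mem_insert, mem_singleton, sum_singleton,
    card_insert_of_notMem, card_singleton, gop_mul_self, mul_one]
  module

lemma QS_pair_eq_Jop {μ ν : Fin 4} (h : μ ≠ ν) :
    QS {μ, ν} (Complex.I • (gop μ * gop ν)) = Jop μ ν := by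
  rw [QS_eq, casimirFactor_pair h, Jop, if_neg h, Sop, spinOrbit, endV_sub_mul, mul_smul_comm,
    mul_assoc (Lop μ ν), gop_mul_gop_mul_self h, endV_mul_neg, mul_one, smul_mul_assoc, one_mul]
  module

lemma Jop_mul_self {μ ν : Fin 4} (h : μ ≠ ν) :
    Jop μ ν * Jop μ ν = (4⁻¹ : ℂ) • 1 - Lop μ ν * Lop μ ν - spinOrbit μ ν := by
  have hcomm : Commute (gop μ * gop ν) (Lop μ ν) :=
    (commute_gop_Lop μ μ ν).mul_left (commute_gop_Lop ν μ ν)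
  simp only [Jop, if_neg h, Sop, spinOrbit, endV_neg_mul, endV_mul_neg, smul_mul_assoc,
    mul_smul_comm, add_mul, mul_add, hcomm.eq, gop_mul_gop_mul_self h]
  match_scalars <;> ring_nf <;> norm_num [Complex.I_sq]

local notation "γ₅" => gop 0 * gop 1 * gop 2 * gop 3

lemma pseudoscalar_mul_self : γ₅ * γ₅ = 1 := by
  simp +decide only [mul_assoc, gop_mul_gop_of_lt_assoc, gop_mul_self_assoc, gop_mul_self,
    endV_mul_neg, endV_neg_neg]

lemma pseudoscalar_mul_gop (μ : Fin 4) : γ₅ * gop μ = -(gop μ * γ₅) := by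
  obtain rfl | rfl | rfl | rfl : μ = 0 ∨ μ = 1 ∨ μ = 2 ∨ μ = 3 := by fin_cases μ <;> simp
  all_goals
    simp +decide only [mul_assoc, gop_mul_gop_of_lt_assoc, gop_mul_gop_of_lt, gop_mul_self_assoc,
      gop_mul_self, endV_mul_neg, endV_neg_neg, mul_one]

lemma commute_pseudoscalar_spinOrbit (μ ν : Fin 4) : Commute γ₅ (spinOrbit μ ν) := by
  have hL : Commute γ₅ (Lop μ ν) :=
    (((commute_gop_Lop 0 μ ν).mul_left (commute_gop_Lop 1 μ ν)).mul_left
      (commute_gop_Lop 2 μ ν)).mul_left (commute_gop_Lop 3 μ ν)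
  have hγ : Commute γ₅ (gop μ * gop ν) := by
    rw [Commute, SemiconjBy, ← mul_assoc, pseudoscalar_mul_gop, endV_neg_mul, mul_assoc (gop μ),
      pseudoscalar_mul_gop, endV_mul_neg, endV_neg_neg]
    exact (mul_assoc _ _ _).symm
  exact hL.mul_right hγ

lemma commute_pseudoscalar_casimirFactor_four : Commute γ₅ (casimirFactor {0, 1, 2, 3}) := by
  have h := commute_pseudoscalar_spinOrbit
  have hX : Commute γ₅ spinOrbitSum :=
    (((((h 0 1).add_right (h 0 2)).add_right (h 0 3)).add_right (h 1 2)).add_right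
      (h 1 3)).add_right (h 2 3)
  rw [casimirFactor_four, Commute, SemiconjBy, endV_mul_sub, endV_sub_mul, hX.eq, mul_smul_comm,
    smul_mul_assoc, mul_one, one_mul]

lemma QS_four_mul_self : QS {0, 1, 2, 3} (-γ₅) * QS {0, 1, 2, 3} (-γ₅) =
    casimirFactor {0, 1, 2, 3} * casimirFactor {0, 1, 2, 3} := by
  have hc : Commute (-γ₅) (casimirFactor {0, 1, 2, 3}) := by
    rw [Commute, SemiconjBy, endV_neg_mul, endV_mul_neg, commute_pseudoscalar_casimirFactor_four.eq]
  have hsq : -γ₅ * -γ₅ = 1 := by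
    rw [endV_neg_mul, endV_mul_neg, endV_neg_neg, pseudoscalar_mul_self]
  rw [QS_eq, hc.mul_mul_mul_comm, hsq, mul_one]

set_option maxHeartbeats 1000000 in
lemma spinOrbitSum_mul_self : spinOrbitSum * spinOrbitSum = (2 : ℂ) • spinOrbitSum -
    (Lop 0 1 * Lop 0 1 + Lop 0 2 * Lop 0 2 + Lop 0 3 * Lop 0 3 + Lop 1 2 * Lop 1 2
      + Lop 1 3 * Lop 1 3 + Lop 2 3 * Lop 2 3) := by
  simp +decide only [spinOrbitSum, spinOrbit, Lop_of_ne]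
  simp +decide only [mul_add, add_mul, endV_mul_sub, endV_sub_mul, mul_assoc, endV_mul_neg,
    aop_mul_adop_self_assoc, aop_mul_adop_of_ne_assoc, (commute_aop_aop _ _).left_comm,
    (commute_adop_adop _ _).left_comm, (commute_gop_aop _ _).left_comm,
    (commute_gop_adop _ _).left_comm, gop_mul_self, gop_mul_self_assoc,
    gop_mul_gop_of_lt, gop_mul_gop_of_lt_assoc, mul_one]
  module

/-- The Casimir operators of `o(2) ⊕ o(2)` and `o(4)` in the spinorial realization are
related to the `osp(1|2)` Casimir operators by `(J₁₂)² = (𝒬^{1,2})²`,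
`(J₃₄)² = (𝒬^{3,4})²` and `Σ_{i<j}(J_{ij})² = (𝒬^{1,2,3,4})² - 3/4`. -/
theorem casimir_correspondence :
    (Jop 0 1 * Jop 0 1 =
      QS {0, 1} (Complex.I • (gop 0 * gop 1)) * QS {0, 1} (Complex.I • (gop 0 * gop 1))) ∧
    (Jop 2 3 * Jop 2 3 =
      QS {2, 3} (Complex.I • (gop 2 * gop 3)) * QS {2, 3} (Complex.I • (gop 2 * gop 3))) ∧
    (Jop 0 1 * Jop 0 1 + Jop 0 2 * Jop 0 2 + Jop 0 3 * Jop 0 3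
        + Jop 1 2 * Jop 1 2 + Jop 1 3 * Jop 1 3 + Jop 2 3 * Jop 2 3 =
      QS {0, 1, 2, 3} (-(gop 0 * gop 1 * gop 2 * gop 3))
          * QS {0, 1, 2, 3} (-(gop 0 * gop 1 * gop 2 * gop 3))
        - (3 / 4 : ℂ) • (1 : Module.End ℂ V)) := by
  refine ⟨by rw [QS_pair_eq_Jop (by decide)], by rw [QS_pair_eq_Jop (by decide)], ?_⟩
  rw [QS_four_mul_self, casimirFactor_four]
  simp +decide only [Jop_mul_self, endV_mul_sub, endV_sub_mul, smul_mul_assoc, mul_smul_comm,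
    one_mul, mul_one, spinOrbitSum_mul_self]
  rw [spinOrbitSum]
  module
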